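/- Let d be an odd prime, c_{j,k} ≥ 0 (j,k ∈ Z_d) with Σ_{j,k} c_{j,k} = 1, ρ = Σ_{j,k} c_{j,k} P̃_{j,k}, and for 0 ≤ t ≤ 1 set ρ(t) = ((1−t)/d²) I_{d²} + t ρ. If t(1 + d − d Σ_{j∈Z_d} c_{j,r}) ≤ 1 for every r ∈ Z_d, then ρ(t) is separable. In particular, ρ(t) is separable whenever t ≤ 1/(1+d). -/

import Mathlib

/-! The quadratic-phase vectors `χ_{q,r} = Σ_u ψ(q u² + r u) |u⟩`, with `ψ` the standard additive
character of `ZMod d`, give product states `σ_{q,r} = |χ_{q,r}⟩⟨χ_{q,r}| / d`. Orthogonality of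
characters (using that `2` is invertible mod `d`) yields
`Σ_{q,r} σ_{q,r} ⊗ σ_{-q, j+2qk-r} = d P̃_{j,k} + 1 - D_k` with `D_s = Σ_m |m⟩⟨m| ⊗ |m+s⟩⟨m+s|`.
As `1 = Σ_s D_s`, `ρ(t)` is then a combination of these product states with weights `t c_{j,k}/d`
and `(1 - t (1 + d - d Σ_j c_{j,s})) / d²`; the hypothesis says precisely that the latter are
nonnegative, and `t ≤ 1/(1+d)` implies it since `c ≥ 0`. -/

open Matrix Kronecker
open scoped ComplexOrder

/-- `η = exp(2πi/d)`. -/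
noncomputable def eta (d : ℕ) : ℂ := Complex.exp (2 * Real.pi * Complex.I / d)

/-- The maximally entangled vector `|Ω_{j,k}⟩ = (S_{j,k} ⊗ I) Σ_u |u⟩|u⟩
    = Σ_m η^{jm} |m⟩|m+k⟩`. -/
noncomputable def Omega (d : ℕ) (j k : ZMod d) : ZMod d × ZMod d → ℂ :=
  fun uv => if uv.2 = uv.1 + k then eta d ^ (j.val * uv.1.val) else 0

/-- The rank-one projection `P̃_{j,k} = (1/d)|Ω_{j,k}⟩⟨Ω_{j,k}|`. -/
noncomputable def Ptilde (d : ℕ) (j k : ZMod d) :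
    Matrix (ZMod d × ZMod d) (ZMod d × ZMod d) ℂ :=
  (d : ℂ)⁻¹ • Matrix.vecMulVec (Omega d j k) (star (Omega d j k))

/-- A bipartite density on `C^d ⊗ C^d` is separable if it is a finite convex
combination of Kronecker products of `d×d` densities. -/
def IsSeparableState {d : ℕ} [NeZero d]
    (ρ : Matrix (ZMod d × ZMod d) (ZMod d × ZMod d) ℂ) : Prop :=
  ∃ (n : ℕ) (w : Fin n → ℝ) (σ τ : Fin n → Matrix (ZMod d) (ZMod d) ℂ),
    (∀ i, 0 ≤ w i) ∧ (∑ i, w i = 1) ∧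
    (∀ i, (σ i).PosSemidef ∧ (σ i).trace = 1) ∧
    (∀ i, (τ i).PosSemidef ∧ (τ i).trace = 1) ∧
    ρ = ∑ i, (w i : ℂ) • (σ i ⊗ₖ τ i)

open ZMod (stdAddChar)

section Character

variable {d : ℕ} [NeZero d]

lemma eta_pow (n : ℕ) : eta d ^ n = stdAddChar (n : ZMod d) := by
  rw [ZMod.stdAddChar_apply, ZMod.toCircle_natCast, eta, ← Complex.exp_nat_mul]
  congr 1
  ring

lemma star_stdAddChar (x : ZMod d) : star (stdAddChar x) = stdAddChar (-x) := by
  rw [AddChar.map_neg_eq_inv, ZMod.stdAddChar_apply, ← Circle.coe_inv, Circle.coe_inv_eq_conj]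
  rfl

lemma sum_stdAddChar_mul (b : ZMod d) :
    ∑ x : ZMod d, stdAddChar (x * b) = if b = 0 then (d : ℂ) else 0 := by
  rw [AddChar.sum_mulShift b (ZMod.isPrimitive_stdAddChar d), ZMod.card]
  push_cast
  rfl

lemma Omega_apply (j k u v : ZMod d) :
    Omega d j k (u, v) = if v = u + k then stdAddChar (j * u) else 0 := by
  rw [Omega, eta_pow, Nat.cast_mul, ZMod.natCast_zmod_val, ZMod.natCast_zmod_val]

lemma Ptilde_apply (j k u v u' v' : ZMod d) :
    Ptilde d j k (u, v) (u', v') =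
      if v = u + k ∧ v' = u' + k then (d : ℂ)⁻¹ * stdAddChar (j * (u - u')) else 0 := by
  rw [Ptilde, Matrix.smul_apply, vecMulVec_apply, Pi.star_apply, Omega_apply, Omega_apply]
  split_ifs
  · rw [star_stdAddChar, ← AddChar.map_add_eq_mul, smul_eq_mul, mul_sub, sub_eq_add_neg]
  all_goals simp_all

end Character

section Density

variable {n : Type*} [Fintype n]

def IsDensityMatrix (σ : Matrix n n ℂ) : Prop :=
  σ.PosSemidef ∧ σ.trace = 1

lemma isDensityMatrix_smul_vecMulVec {a : ℂ} (ha : 0 ≤ a) (v : n → ℂ)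
    (hv : a * (v ⬝ᵥ star v) = 1) : IsDensityMatrix (a • vecMulVec v (star v)) :=
  ⟨(posSemidef_vecMulVec_self_star v).smul ha,
    by rw [trace_smul, trace_vecMulVec, smul_eq_mul, hv]⟩

lemma isDensityMatrix_single [DecidableEq n] (m : n) : IsDensityMatrix (single m m (1 : ℂ)) :=
  ⟨diagonal_single m (1 : ℂ) ▸ PosSemidef.diagonal (Pi.single_nonneg.mpr zero_le_one),
    trace_single_eq_same m 1⟩

end Density

lemma isSeparableState_of_fintype {d : ℕ} [NeZero d] {ι : Type*} [Fintype ι]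
    {ρ : Matrix (ZMod d × ZMod d) (ZMod d × ZMod d) ℂ} (w : ι → ℝ)
    (σ τ : ι → Matrix (ZMod d) (ZMod d) ℂ) (hw : ∀ i, 0 ≤ w i) (hw1 : ∑ i, w i = 1)
    (hσ : ∀ i, IsDensityMatrix (σ i)) (hτ : ∀ i, IsDensityMatrix (τ i))
    (hρ : ρ = ∑ i, (w i : ℂ) • (σ i ⊗ₖ τ i)) : IsSeparableState ρ := by
  let e := (Fintype.equivFin ι).symm
  refine ⟨Fintype.card ι, w ∘ e, σ ∘ e, τ ∘ e, fun i => hw _, ?_, fun i => hσ _, fun i => hτ _,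
    ?_⟩
  · rw [← hw1]
    exact e.sum_comp w
  · rw [hρ]
    exact (e.sum_comp fun i => (w i : ℂ) • (σ i ⊗ₖ τ i)).symm

section QuadraticPhase

variable {d : ℕ} [NeZero d]

noncomputable def quadPhase (q r : ZMod d) : ZMod d → ℂ :=
  fun u => stdAddChar (q * u * u + r * u)

noncomputable def quadPhaseState (q r : ZMod d) : Matrix (ZMod d) (ZMod d) ℂ :=
  (d : ℂ)⁻¹ • vecMulVec (quadPhase q r) (star (quadPhase q r))

lemma isDensityMatrix_quadPhaseState (q r : ZMod d) : IsDensityMatrix (quadPhaseState q r) := by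
  refine isDensityMatrix_smul_vecMulVec (by positivity) _ ?_
  have hunit (u : ZMod d) : quadPhase q r u * star (quadPhase q r u) = 1 := by
    rw [quadPhase, star_stdAddChar, ← AddChar.map_add_eq_mul, add_neg_cancel,
      AddChar.map_zero_eq_one]
  simp only [dotProduct, Pi.star_apply, hunit, Finset.sum_const, Finset.card_univ, ZMod.card,
    nsmul_eq_mul, mul_one]
  exact inv_mul_cancel₀ (NeZero.ne _)

lemma quadPhaseState_apply (q r u u' : ZMod d) :
    quadPhaseState q r u u' =
      (d : ℂ)⁻¹ * stdAddChar (q * (u * u - u' * u') + r * (u - u')) := by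
  rw [quadPhaseState, Matrix.smul_apply, vecMulVec_apply, Pi.star_apply, quadPhase, quadPhase,
    star_stdAddChar, ← AddChar.map_add_eq_mul, smul_eq_mul]
  congr 2
  ring

end QuadraticPhase

section Twirl

variable {d : ℕ} [NeZero d]

noncomputable def shiftDiag (s : ZMod d) : Matrix (ZMod d × ZMod d) (ZMod d × ZMod d) ℂ :=
  ∑ m, single m m 1 ⊗ₖ single (m + s) (m + s) 1

lemma shiftDiag_apply (s u v u' v' : ZMod d) :
    shiftDiag s (u, v) (u', v') = if u' = u ∧ v' = v ∧ v = u + s then 1 else 0 := by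
  simp only [shiftDiag, Matrix.sum_apply, kroneckerMap_apply, single_apply]
  rw [Finset.sum_eq_single u (fun m _ hm => by simp [hm]) (by simp)]
  grind

lemma sum_shiftDiag : ∑ s : ZMod d, shiftDiag s = 1 := by
  ext ⟨u, v⟩ ⟨u', v'⟩
  simp only [Matrix.sum_apply, shiftDiag_apply, one_apply, ← sub_eq_iff_eq_add', ite_and]
  simp [Prod.ext_iff, eq_comm, ite_and]

noncomputable def quadPhaseTwirl (j k : ZMod d) :
    Matrix (ZMod d × ZMod d) (ZMod d × ZMod d) ℂ :=
  ∑ q, ∑ r, quadPhaseState q r ⊗ₖ quadPhaseState (-q) (j + 2 * q * k - r)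

lemma quadPhaseTwirl_apply (j k u v u' v' : ZMod d) :
    quadPhaseTwirl j k (u, v) (u', v') =
      if u - u' = v - v' ∧ u * u - u' * u' - v * v + v' * v' + 2 * k * (v - v') = 0 then
        stdAddChar (j * (v - v'))
      else 0 := by
  set X := u * u - u' * u' - v * v + v' * v' + 2 * k * (v - v')
  have hterm (q r : ZMod d) :
      quadPhaseState q r u u' * quadPhaseState (-q) (j + 2 * q * k - r) v v' =
        ((d : ℂ)⁻¹ * (d : ℂ)⁻¹ * stdAddChar (j * (v - v'))) *
          (stdAddChar (q * X) * stdAddChar (r * (u - u' - (v - v')))) := by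
    rw [quadPhaseState_apply, quadPhaseState_apply, mul_mul_mul_comm, ← AddChar.map_add_eq_mul,
      ← AddChar.map_add_eq_mul, mul_assoc (_ * _), ← AddChar.map_add_eq_mul]
    congr 2
    ring
  simp only [quadPhaseTwirl, Matrix.sum_apply, kroneckerMap_apply, hterm, ← Finset.mul_sum,
    ← Finset.sum_mul, sum_stdAddChar_mul, sub_eq_zero]
  have hd : (d : ℂ) ≠ 0 := NeZero.ne _
  by_cases hY : u - u' = v - v' <;> by_cases hX : X = 0 <;>
    simp only [hX, hY, if_true, if_false, and_true, and_false, mul_zero, zero_mul]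
  field_simp

/-- With `Δ = u - u' = v - v'` the phase `X` of `quadPhaseTwirl_apply` is `2 Δ (k - (v - u))`,
so off the diagonal the twirl is supported exactly where `d • P̃_{j,k}` is. -/
lemma quadPhaseTwirl_add_shiftDiag [Fact d.Prime] (h2 : (2 : ZMod d) ≠ 0) (j k : ZMod d) :
    quadPhaseTwirl j k + shiftDiag k = (d : ℂ) • Ptilde d j k + 1 := by
  ext ⟨u, v⟩ ⟨u', v'⟩
  simp only [Matrix.add_apply, Matrix.smul_apply, quadPhaseTwirl_apply, shiftDiag_apply,
    Ptilde_apply, one_apply, Prod.mk.injEq, smul_eq_mul]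
  by_cases hΔ : u - u' = v - v'
  swap
  · have h₁ : ¬(u' = u ∧ v' = v ∧ v = u + k) := by rintro ⟨rfl, rfl, -⟩; simp at hΔ
    have h₂ : ¬(v = u + k ∧ v' = u' + k) := by rintro ⟨rfl, rfl⟩; apply hΔ; ring
    have h₃ : ¬(u = u' ∧ v = v') := by rintro ⟨rfl, rfl⟩; simp at hΔ
    simp [hΔ, h₁, h₂, h₃]
  have hd : (d : ℂ) ≠ 0 := NeZero.ne _
  by_cases h0 : u = u'
  · subst h0
    obtain rfl : v' = v := (sub_eq_zero.mp (hΔ.symm.trans (sub_self u))).symm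
    simp [hd, add_comm]
  have hX : u * u - u' * u' - v * v + v' * v' + 2 * k * (v - v') =
      2 * (u - u') * (k - (v - u)) := by
    obtain rfl : v' = v - (u - u') := by rw [hΔ]; ring
    ring
  have hk : 2 * (u - u') * (k - (v - u)) = 0 ↔ v = u + k := by
    rw [mul_eq_zero, or_iff_right (mul_ne_zero h2 (sub_ne_zero.mpr h0)), sub_eq_zero,
      eq_sub_iff_add_eq', eq_comm]
  have hv' : v = u + k ∧ v' = u' + k ↔ v = u + k :=
    ⟨And.left, fun h => ⟨h, by linear_combination h + hΔ⟩⟩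
  have h₁ : ¬(u' = u ∧ v' = v ∧ v = u + k) := fun h => h0 h.1.symm
  have h₂ : ¬(u = u' ∧ v = v') := fun h => h0 h.1
  simp only [hX, hk]
  simp only [← hΔ, hv', h₁, h₂, true_and, if_false, add_zero]
  split_ifs <;> simp [hd]

end Twirl

section Decomposition

variable {d : ℕ} [NeZero d] (c : ZMod d → ZMod d → ℝ) (t : ℝ)

lemma sum_smul_Ptilde [Fact d.Prime] (h2 : (2 : ZMod d) ≠ 0)
    (hsum : ∑ j : ZMod d, ∑ k : ZMod d, c j k = 1) :
    ∑ j : ZMod d, ∑ k : ZMod d, (c j k : ℂ) • Ptilde d j k =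
      (d : ℂ)⁻¹ • (∑ j : ZMod d, ∑ k : ZMod d, (c j k : ℂ) • quadPhaseTwirl j k +
        ∑ s : ZMod d, ((∑ j, c j s : ℝ) : ℂ) • shiftDiag s - 1) := by
  have hd : (d : ℂ) ≠ 0 := NeZero.ne _
  have hP (j k : ZMod d) :
      Ptilde d j k = (d : ℂ)⁻¹ • (quadPhaseTwirl j k + shiftDiag k - 1) := by
    rw [quadPhaseTwirl_add_shiftDiag h2, add_sub_cancel_right, inv_smul_smul₀ hd]
  have hshift : ∑ j : ZMod d, ∑ k : ZMod d, (c j k : ℂ) • shiftDiag k =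
      ∑ s : ZMod d, ((∑ j, c j s : ℝ) : ℂ) • shiftDiag s := by
    rw [Finset.sum_comm]
    push_cast
    simp only [Finset.sum_smul]
  have hone : ∑ j : ZMod d, ∑ k : ZMod d,
      (c j k : ℂ) • (1 : Matrix (ZMod d × ZMod d) (ZMod d × ZMod d) ℂ) = 1 := by
    have hsumℂ : ∑ j : ZMod d, ∑ k : ZMod d, (c j k : ℂ) = 1 := by exact_mod_cast hsum
    simp only [← Finset.sum_smul, hsumℂ, one_smul]
  simp only [hP, smul_comm (c _ _ : ℂ) (d : ℂ)⁻¹, ← Finset.smul_sum, smul_add, smul_sub,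
    Finset.sum_add_distrib, Finset.sum_sub_distrib, hshift, hone]

noncomputable def isotropicMixture : Matrix (ZMod d × ZMod d) (ZMod d × ZMod d) ℂ :=
  (((1 - t) / (d : ℝ) ^ 2 : ℝ) : ℂ) • 1 +
    (t : ℂ) • ∑ j : ZMod d, ∑ k : ZMod d, (c j k : ℂ) • Ptilde d j k

lemma isotropicMixture_eq_twirl_add_shiftDiag [Fact d.Prime] (h2 : (2 : ZMod d) ≠ 0)
    (hsum : ∑ j : ZMod d, ∑ k : ZMod d, c j k = 1) :
    isotropicMixture c t =
      ∑ j : ZMod d, ∑ k : ZMod d, ((t * c j k / d : ℝ) : ℂ) • quadPhaseTwirl j k +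
        ∑ s : ZMod d, (((1 - t * (1 + d - d * ∑ j, c j s)) / (d : ℝ) ^ 2 : ℝ) : ℂ) •
          shiftDiag s := by
  have hd : (d : ℂ) ≠ 0 := NeZero.ne _
  have htwirl : ∑ j : ZMod d, ∑ k : ZMod d, ((t * c j k / d : ℝ) : ℂ) • quadPhaseTwirl j k =
      ((t : ℂ) / d) • ∑ j : ZMod d, ∑ k : ZMod d, (c j k : ℂ) • quadPhaseTwirl j k := by
    simp only [Finset.smul_sum, smul_smul]
    refine Finset.sum_congr rfl fun j _ => Finset.sum_congr rfl fun k _ =>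
      congrArg (· • quadPhaseTwirl j k) ?_
    push_cast
    ring
  have hshift : ∑ s : ZMod d, (((1 - t * (1 + d - d * ∑ j, c j s)) / (d : ℝ) ^ 2 : ℝ) : ℂ) •
        shiftDiag s =
      ((1 - t) / (d : ℂ) ^ 2 - t / d) • ∑ s : ZMod d, shiftDiag s +
        ((t : ℂ) / d) • ∑ s : ZMod d, ((∑ j, c j s : ℝ) : ℂ) • shiftDiag s := by
    simp only [Finset.smul_sum, smul_smul, ← Finset.sum_add_distrib, ← add_smul]
    refine Finset.sum_congr rfl fun s _ => congrArg (· • shiftDiag s) ?_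
    push_cast
    field_simp
    ring
  rw [isotropicMixture, sum_smul_Ptilde c h2 hsum, htwirl, hshift, sum_shiftDiag]
  push_cast
  module

/-- `inl (j, k, q, r)` indexes the pair `σ_{q,r} ⊗ σ_{-q, j+2qk-r}` of `quadPhaseTwirl j k`,
`inr (s, m)` the pair `|m⟩⟨m| ⊗ |m+s⟩⟨m+s|` of `shiftDiag s`. -/
abbrev ProductIndex (d : ℕ) := (ZMod d × ZMod d × ZMod d × ZMod d) ⊕ (ZMod d × ZMod d)

noncomputable def productWeight : ProductIndex d → ℝ :=
  Sum.elim (fun ⟨j, k, _, _⟩ => t * c j k / d)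
    (fun ⟨s, _⟩ => (1 - t * (1 + d - d * ∑ j, c j s)) / (d : ℝ) ^ 2)

noncomputable def productLeft : ProductIndex d → Matrix (ZMod d) (ZMod d) ℂ :=
  Sum.elim (fun ⟨_, _, q, r⟩ => quadPhaseState q r) (fun ⟨_, m⟩ => single m m 1)

noncomputable def productRight : ProductIndex d → Matrix (ZMod d) (ZMod d) ℂ :=
  Sum.elim (fun ⟨j, k, q, r⟩ => quadPhaseState (-q) (j + 2 * q * k - r))
    (fun ⟨s, m⟩ => single (m + s) (m + s) 1)

lemma isDensityMatrix_productLeft (i : ProductIndex d) : IsDensityMatrix (productLeft i) := by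
  rcases i with ⟨_, _, q, r⟩ | ⟨_, m⟩
  exacts [isDensityMatrix_quadPhaseState q r, isDensityMatrix_single m]

lemma isDensityMatrix_productRight (i : ProductIndex d) : IsDensityMatrix (productRight i) := by
  rcases i with ⟨_, _, _, _⟩ | ⟨_, _⟩
  exacts [isDensityMatrix_quadPhaseState _ _, isDensityMatrix_single _]

lemma productWeight_nonneg (hc : ∀ j k, 0 ≤ c j k) (ht : 0 ≤ t)
    (hcol : ∀ s : ZMod d, t * (1 + (d : ℝ) - (d : ℝ) * ∑ j : ZMod d, c j s) ≤ 1)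
    (i : ProductIndex d) : 0 ≤ productWeight c t i := by
  rcases i with ⟨j, k, _, _⟩ | ⟨s, _⟩
  · exact div_nonneg (mul_nonneg ht (hc j k)) (Nat.cast_nonneg d)
  · exact div_nonneg (sub_nonneg.mpr (hcol s)) (by positivity)

lemma sum_productWeight (hsum : ∑ j : ZMod d, ∑ k : ZMod d, c j k = 1) :
    ∑ i, productWeight c t i = 1 := by
  have hd : (d : ℝ) ≠ 0 := NeZero.ne _
  have hcol : ∑ s : ZMod d, ∑ j : ZMod d, c j s = 1 := by rw [Finset.sum_comm]; exact hsum
  have hquad (j k : ZMod d) : ((d * d : ℕ) : ℝ) * (t * c j k / d) = d * t * c j k := by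
    push_cast
    field_simp
  have hbasis (s : ZMod d) : (d : ℝ) * ((1 - t * (1 + d - d * ∑ j, c j s)) / (d : ℝ) ^ 2) =
      (1 - t * (1 + d)) / d + t * ∑ j, c j s := by
    field_simp
    ring
  simp only [Fintype.sum_sum_type, Fintype.sum_prod_type, productWeight, Sum.elim_inl,
    Sum.elim_inr, Finset.sum_const, Finset.card_univ, Fintype.card_prod, ZMod.card, nsmul_eq_mul,
    hquad, hbasis, Finset.sum_add_distrib, ← Finset.mul_sum, hsum, hcol]
  field_simp
  ring

lemma isotropicMixture_eq_sum_kronecker [Fact d.Prime] (h2 : (2 : ZMod d) ≠ 0)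
    (hsum : ∑ j : ZMod d, ∑ k : ZMod d, c j k = 1) :
    isotropicMixture c t = ∑ i, (productWeight c t i : ℂ) • (productLeft i ⊗ₖ productRight i) := by
  rw [isotropicMixture_eq_twirl_add_shiftDiag c t h2 hsum]
  simp only [Fintype.sum_sum_type, Fintype.sum_prod_type, productWeight, productLeft,
    productRight, Sum.elim_inl, Sum.elim_inr, quadPhaseTwirl, shiftDiag, Finset.smul_sum]

end Decomposition

theorem bhn_segment_separable_general (d : ℕ) [NeZero d] (hd : d.Prime) (hodd : Odd d)
    (c : ZMod d → ZMod d → ℝ) (hc : ∀ j k, 0 ≤ c j k)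
    (hsum : ∑ j : ZMod d, ∑ k : ZMod d, c j k = 1)
    (t : ℝ) (ht0 : 0 ≤ t)
    (ρ ρt : Matrix (ZMod d × ZMod d) (ZMod d × ZMod d) ℂ)
    (hρ : ρ = ∑ j : ZMod d, ∑ k : ZMod d, (c j k : ℂ) • Ptilde d j k)
    (hρt : ρt = (((1 - t) / (d : ℝ) ^ 2 : ℝ) : ℂ)
          • (1 : Matrix (ZMod d × ZMod d) (ZMod d × ZMod d) ℂ)
        + (t : ℂ) • ρ) :
    ((∀ r : ZMod d, t * (1 + (d : ℝ) - (d : ℝ) * ∑ j : ZMod d, c j r) ≤ 1) →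
        IsSeparableState ρt) ∧
    (t ≤ 1 / (1 + (d : ℝ)) → IsSeparableState ρt) := by
  have : Fact d.Prime := ⟨hd⟩
  have h2 : (2 : ZMod d) ≠ 0 := Ring.two_ne_zero <| by
    rw [ZMod.ringChar_zmod_n]
    rintro rfl
    exact Nat.not_even_iff_odd.mpr hodd even_two
  have hρt' : ρt = isotropicMixture c t := by rw [hρt, hρ, isotropicMixture]
  have hsep (hcol : ∀ r : ZMod d, t * (1 + (d : ℝ) - (d : ℝ) * ∑ j : ZMod d, c j r) ≤ 1) :
      IsSeparableState ρt :=
    isSeparableState_of_fintype (productWeight c t) productLeft productRight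
      (productWeight_nonneg c t hc ht0 hcol) (sum_productWeight c t hsum)
      isDensityMatrix_productLeft isDensityMatrix_productRight
      (hρt'.trans (isotropicMixture_eq_sum_kronecker c t h2 hsum))
  refine ⟨hsep, fun hle => hsep fun r => ?_⟩
  have hC : 0 ≤ ∑ j : ZMod d, c j r := Finset.sum_nonneg fun j _ => hc j r
  have ht : t * (1 + d) ≤ 1 := (le_div_iff₀ (by positivity)).mp hle
  nlinarith [mul_nonneg ht0 (mul_nonneg (Nat.cast_nonneg d) hC)]

/-- For `d` an odd prime, nonnegative `c_{j,k}` summing to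
one, `ρ = Σ_{j,k} c_{j,k} P̃_{j,k}` and `ρ(t) = ((1−t)/d²) I + t ρ` with
`0 ≤ t ≤ 1`: if `t(1 + d − d Σ_j c_{j,r}) ≤ 1` for every `r`, then `ρ(t)` is
separable; in particular `ρ(t)` is separable whenever `t ≤ 1/(1+d)`. -/
theorem bhn_segment_separable (d : ℕ) [NeZero d] (hd : d.Prime) (hodd : Odd d)
    (c : ZMod d → ZMod d → ℝ) (hc : ∀ j k, 0 ≤ c j k)
    (hsum : ∑ j : ZMod d, ∑ k : ZMod d, c j k = 1)
    (t : ℝ) (ht0 : 0 ≤ t) (ht1 : t ≤ 1)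
    (ρ ρt : Matrix (ZMod d × ZMod d) (ZMod d × ZMod d) ℂ)
    (hρ : ρ = ∑ j : ZMod d, ∑ k : ZMod d, (c j k : ℂ) • Ptilde d j k)
    (hρt : ρt = (((1 - t) / (d : ℝ) ^ 2 : ℝ) : ℂ)
          • (1 : Matrix (ZMod d × ZMod d) (ZMod d × ZMod d) ℂ)
        + (t : ℂ) • ρ) :
    ((∀ r : ZMod d, t * (1 + (d : ℝ) - (d : ℝ) * ∑ j : ZMod d, c j r) ≤ 1) →
        IsSeparableState ρt) ∧
    (t ≤ 1 / (1 + (d : ℝ)) → IsSeparableState ρt) :=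
  bhn_segment_separable_general d hd hodd c hc hsum t ht0 ρ ρt hρ hρt
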